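/- arXiv:quant-ph/0611033 — 2 statements merged into one kernel-verified Lean document; each statement's English description precedes it below -/
import Mathlib

section
/- If R(ρ) = (1/m)·∑_{i=1}^m U_i ρ U_i† is an ε-randomizing map on d-dimensional states with respect to the trace norm (i.e. ‖R(ρ) − I/d‖₁ ≤ ε for all density matrices ρ), then m ≥ d(1 − ε/2). -/
open Matrix ComplexOrder

/-- The trace norm (sum of singular values) of a complex square matrix. -/
noncomputable def traceNorm {n : Type*} [Fintype n] [DecidableEq n] (M : Matrix n n ℂ) : ℝ :=
  ((Matrix.posSemidef_conjTranspose_mul_self M).1.eigenvectorUnitary.1 *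
    diagonal ((fun x : ℝ => (x : ℂ)) ∘ Real.sqrt ∘ (Matrix.posSemidef_conjTranspose_mul_self M).1.eigenvalues) *
    (star (Matrix.posSemidef_conjTranspose_mul_self M).1.eigenvectorUnitary : Matrix n n ℂ)).trace.re

/-- The Frobenius (Hilbert–Schmidt) norm of a complex square matrix. -/
noncomputable def frobNorm {n : Type*} [Fintype n] (M : Matrix n n ℂ) : ℝ :=
  Real.sqrt ((Mᴴ * M).trace.re)

/-!
Feed the map a pure state `ρ`. Then `R(ρ)` is a density matrix of rank `k ≤ m`, so `d - k` of
its eigenvalues `μᵢ` vanish. In `‖R(ρ) - I/d‖₁ = ∑ |μᵢ - 1/d|` each vanishing eigenvalue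
contributes `1/d`, and the others together at least `∑ (μᵢ - 1/d) = 1 - k/d`. Hence
`ε ≥ 2 - 2k/d ≥ 2 - 2m/d`.
-/

lemma le_sum_abs_sub_of_sum_eq_one {ι : Type*} [Fintype ι] {μ : ι → ℝ} (hμ : ∑ i, μ i = 1)
    {c : ℝ} (hc : 0 ≤ c) :
    1 + (Fintype.card ι - 2 * Fintype.card {i // μ i ≠ 0}) * c ≤ ∑ i, |μ i - c| := by
  have hterm : ∀ i, μ i + c - (if μ i ≠ 0 then 2 * c else 0) ≤ |μ i - c| := by
    intro i
    split_ifs with h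
    · linarith [le_abs_self (μ i - c)]
    · rw [not_not.mp h, zero_sub, abs_neg, abs_of_nonneg hc]
      linarith
  calc 1 + (Fintype.card ι - 2 * Fintype.card {i // μ i ≠ 0}) * c
      = ∑ i, (μ i + c - if μ i ≠ 0 then 2 * c else 0) := by
        rw [Finset.sum_sub_distrib, Finset.sum_add_distrib, hμ, Finset.sum_ite,
          Finset.sum_const_zero, Finset.sum_const, Finset.sum_const, Finset.card_univ,
          Fintype.card_subtype]
        simp only [nsmul_eq_mul]
        ring
    _ ≤ ∑ i, |μ i - c| := Finset.sum_le_sum fun i _ => hterm i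

section Rank

variable {ι m n K : Type*} [Fintype n] [Field K]

lemma Matrix.rank_add_le (A B : Matrix m n K) : (A + B).rank ≤ A.rank + B.rank := by
  unfold rank
  rw [mulVecLin_add]
  calc Module.finrank K (LinearMap.range (A.mulVecLin + B.mulVecLin))
      ≤ Module.finrank K ↥(LinearMap.range A.mulVecLin ⊔ LinearMap.range B.mulVecLin) :=
        Submodule.finrank_mono (LinearMap.range_add_le _ _)
    _ ≤ _ := Submodule.finrank_add_le_finrank_add_finrank _ _

lemma Matrix.rank_smul_le [DecidableEq n] (c : K) (A : Matrix n n K) : (c • A).rank ≤ A.rank := by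
  rw [← smul_one_mul]
  exact rank_mul_le_right _ _

lemma Matrix.rank_sum_mul_mul_le [Fintype m] (s : Finset ι) (A : ι → Matrix m n K)
    (ρ : Matrix n n K) (B : ι → Matrix n m K) :
    (∑ i ∈ s, A i * ρ * B i).rank ≤ s.card * ρ.rank := by
  calc (∑ i ∈ s, A i * ρ * B i).rank ≤ ∑ i ∈ s, (A i * ρ * B i).rank :=
        Finset.le_sum_of_subadditive (rank : Matrix m m K → ℕ) rank_zero.le rank_add_le s _
    _ ≤ ∑ _i ∈ s, ρ.rank := Finset.sum_le_sum fun i _ =>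
        ((A i * ρ).rank_mul_le_left _).trans (rank_mul_le_right _ _)
    _ = s.card * ρ.rank := by rw [Finset.sum_const, smul_eq_mul]

end Rank

section Conjugation

variable {ι n R : Type*} [Fintype n] [CommRing R] [StarRing R]

lemma Matrix.trace_sum_mul_mul_conjTranspose [DecidableEq n] (s : Finset ι)
    (U : ι → Matrix n n R) (hU : ∀ i, (U i)ᴴ * U i = 1) (ρ : Matrix n n R) :
    (∑ i ∈ s, U i * ρ * (U i)ᴴ).trace = s.card * ρ.trace := by
  rw [trace_sum, Finset.sum_congr rfl fun i _ => by rw [trace_mul_cycle, hU, Matrix.one_mul],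
    Finset.sum_const, nsmul_eq_mul]

lemma Matrix.IsHermitian.sum_mul_mul_conjTranspose (s : Finset ι) (U : ι → Matrix n n R)
    {ρ : Matrix n n R} (hρ : ρ.IsHermitian) : (∑ i ∈ s, U i * ρ * (U i)ᴴ).IsHermitian :=
  Finset.sum_induction _ IsHermitian (fun _ _ => IsHermitian.add) isHermitian_zero
    fun _ _ => isHermitian_mul_mul_conjTranspose _ hρ

end Conjugation

section TraceNorm

open scoped MatrixOrder

variable {n : Type*} [Fintype n] [DecidableEq n]

lemma traceNorm_eq_re_trace_abs (M : Matrix n n ℂ) : traceNorm M = (CFC.abs M).trace.re := by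
  rw [CFC.abs, star_eq_conjTranspose,
    CFC.sqrt_eq_real_sqrt _ (posSemidef_conjTranspose_mul_self M).nonneg, cfcₙ_eq_cfc,
    (posSemidef_conjTranspose_mul_self M).isHermitian.cfc_eq, IsHermitian.cfc,
    Unitary.conjStarAlgAut_apply]
  rfl

lemma Matrix.IsHermitian.trace_cfc {𝕜 : Type*} [RCLike 𝕜] {A : Matrix n n 𝕜} (hA : A.IsHermitian)
    (f : ℝ → ℝ) : (cfc f A).trace = ∑ i, (f (hA.eigenvalues i) : 𝕜) := by
  rw [hA.cfc_eq, IsHermitian.cfc, Unitary.conjStarAlgAut_apply, trace_mul_cycle,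
    Unitary.coe_star_mul_self, Matrix.one_mul, trace_diagonal]
  rfl

lemma Matrix.IsHermitian.traceNorm_cfc {A : Matrix n n ℂ} (hA : A.IsHermitian) (f : ℝ → ℝ) :
    traceNorm (cfc f A) = ∑ i, |f (hA.eigenvalues i)| := by
  rw [traceNorm_eq_re_trace_abs, CFC.abs_eq_cfc_norm (cfc f A),
    ← cfc_comp' _ _ A continuous_norm.continuousOn (A.finite_real_spectrum.continuousOn f),
    hA.trace_cfc, Complex.re_sum]
  simp

lemma Matrix.IsHermitian.traceNorm_sub_smul_one {A : Matrix n n ℂ} (hA : A.IsHermitian) (c : ℝ) :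
    traceNorm (A - (c : ℂ) • 1) = ∑ i, |hA.eigenvalues i - c| := by
  have hcfc : A - (c : ℂ) • 1 = cfc (fun x => x - c) A := by
    rw [cfc_sub _ _ A, cfc_id' ℝ A, cfc_const c A, Algebra.algebraMap_eq_smul_one]
    rfl
  rw [hcfc, hA.traceNorm_cfc]

lemma Matrix.IsHermitian.le_traceNorm_sub_smul_one {A : Matrix n n ℂ} (hA : A.IsHermitian)
    (htr : A.trace = 1) {c : ℝ} (hc : 0 ≤ c) :
    1 + (Fintype.card n - 2 * A.rank) * c ≤ traceNorm (A - (c : ℂ) • 1) := by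
  have hsum : ∑ i, hA.eigenvalues i = 1 := by
    simpa using congrArg Complex.re (hA.trace_eq_sum_eigenvalues.symm.trans htr)
  rw [hA.traceNorm_sub_smul_one, hA.rank_eq_card_non_zero_eigs]
  exact le_sum_abs_sub_of_sum_eq_one hsum hc

end TraceNorm

theorem num_unitaries_lower_bound_general (d m : ℕ) (hd : 0 < d) (hm : 0 < m)
    (ε : ℝ)
    (U : Fin m → Matrix (Fin d) (Fin d) ℂ)
    (hU : ∀ i, (U i)ᴴ * U i = 1 ∧ U i * (U i)ᴴ = 1)
    (hrand : ∀ ρ : Matrix (Fin d) (Fin d) ℂ, ρ.PosSemidef → ρ.trace = 1 →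
      traceNorm ((m : ℂ)⁻¹ • ∑ i, U i * ρ * (U i)ᴴ - (d : ℂ)⁻¹ • 1) ≤ ε) :
    (d : ℝ) * (1 - ε / 2) ≤ m := by
  set w : Fin d → ℂ := Pi.single ⟨0, hd⟩ 1
  set ρ := vecMulVec w (star w)
  have hρ : ρ.PosSemidef := posSemidef_vecMulVec_self_star w
  have hρ_tr : ρ.trace = 1 := by simp [ρ, w, trace_vecMulVec]
  set R := (m : ℂ)⁻¹ • ∑ i, U i * ρ * (U i)ᴴ
  have hR : R.IsHermitian :=
    (IsSelfAdjoint.natCast m).inv₀.smul (hρ.isHermitian.sum_mul_mul_conjTranspose _ U)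
  have hR_tr : R.trace = 1 := by
    rw [trace_smul, trace_sum_mul_mul_conjTranspose _ U (fun i => (hU i).1), hρ_tr,
      Finset.card_univ, Fintype.card_fin, mul_one, smul_eq_mul, inv_mul_cancel₀ (by positivity)]
  have hR_rank : (R.rank : ℝ) ≤ m := by
    simpa using ((rank_smul_le _ _).trans (rank_sum_mul_mul_le Finset.univ U ρ _)).trans
      (Nat.mul_le_mul_left _ (rank_vecMulVec_le w (star w)))
  have hdist : 1 + (d - 2 * R.rank) * (d : ℝ)⁻¹ ≤ ε := by
    simpa using (hR.le_traceNorm_sub_smul_one hR_tr (inv_nonneg.mpr (Nat.cast_nonneg d))).trans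
      (by simpa using hrand ρ hρ hρ_tr)
  have hd_pos : (0 : ℝ) < d := by exact_mod_cast hd
  field_simp at hdist
  linarith

theorem num_unitaries_lower_bound (d m : ℕ) (hd : 0 < d) (hm : 0 < m)
    (ε : ℝ) (hε0 : 0 ≤ ε) (hε2 : ε ≤ 2)
    (U : Fin m → Matrix (Fin d) (Fin d) ℂ)
    (hU : ∀ i, (U i)ᴴ * U i = 1 ∧ U i * (U i)ᴴ = 1)
    (hrand : ∀ ρ : Matrix (Fin d) (Fin d) ℂ, ρ.PosSemidef → ρ.trace = 1 →
      traceNorm ((m : ℂ)⁻¹ • ∑ i, U i * ρ * (U i)ᴴ - (d : ℂ)⁻¹ • 1) ≤ ε) :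
    (d : ℝ) * (1 - ε / 2) ≤ m :=
  num_unitaries_lower_bound_general d m hd hm ε U hU hrand
end

section
/- For nonzero u ∈ {0,1}^{rs}, the mod-2 scalar product ⟨u, s_{xy}⟩ equals ⟨p_u(x), y⟩, where p_u(x) = ∑_{j∈[s]} (∑_{i∈[r]} u_{ij} e_i) x^j is a nonzero polynomial over GF(2^r) of degree at most s−1. -/
/-!
The scalar product `⟨·, y⟩` is `GF(2)`-linear in its first argument, so
`⟨u, s_{xy}⟩ = ⟨∑ u_{ij} eᵢ xʲ, y⟩ = ⟨p_u(x), y⟩`. The `j`-th coefficient of `p_u` is the field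
element with coordinates `(u_{ij})ᵢ` in the basis `e`, so `p_u = 0` forces `u = 0`.
-/

/-- The mod-2 scalar product of the coordinate vectors of `w, z : F` with respect to a
fixed `GF(2)`-basis `b` of `F`. -/
noncomputable def dotF {r : ℕ} {F : Type*} [AddCommGroup F] [Module (ZMod 2) F]
    (b : Module.Basis (Fin r) (ZMod 2) F) (w z : F) : ZMod 2 :=
  ∑ i, b.repr w i * b.repr z i

/-- The `(i,j)`-th bit of the string `s_{xy}` in the Alon–Goldreich–Håstad–Peralta
construction: `⟨eᵢ xʲ, y⟩`. -/
noncomputable def sBit {r s : ℕ} {F : Type*} [Field F] [Module (ZMod 2) F]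
    (b : Module.Basis (Fin r) (ZMod 2) F) (x y : F) (p : Fin r × Fin s) : ZMod 2 :=
  dotF b (b p.1 * x ^ (p.2 : ℕ)) y

lemma dotF_sum_smul_left {r : ℕ} {F : Type*} [AddCommGroup F] [Module (ZMod 2) F]
    (b : Module.Basis (Fin r) (ZMod 2) F) {κ : Type*} (t : Finset κ) (c : κ → ZMod 2)
    (w : κ → F) (z : F) :
    dotF b (∑ q ∈ t, c q • w q) z = ∑ q ∈ t, c q * dotF b (w q) z := by
  simp only [dotF, map_sum, map_smul, Finsupp.coe_finsetSum, Finsupp.coe_smul,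
    Finset.sum_apply, Pi.smul_apply, smul_eq_mul, Finset.sum_mul, Finset.mul_sum, mul_assoc]
  exact Finset.sum_comm

namespace Polynomial

variable {R F ι : Type*} [Fintype ι]

theorem sum_C_sum_smul_basis_mul_X_pow_eq_zero_iff [Semiring R] [Semiring F] [Module R F]
    (b : Module.Basis ι R F) {s : ℕ} (u : ι × Fin s → R) :
    ∑ j : Fin s, C (∑ i, u (i, j) • b i) * X ^ (j : ℕ) = 0 ↔ u = 0 := by
  classical
  have hofFn : ∑ j : Fin s, C (∑ i, u (i, j) • b i) * X ^ (j : ℕ) =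
      ofFn s fun j ↦ b.equivFun.symm fun i ↦ u (i, j) := by
    simp only [ofFn_eq_sum_monomial, C_mul_X_pow_eq_monomial, b.equivFun_symm_apply]
  rw [hofFn, ← (ofFn s).map_zero, (injective_ofFn s).eq_iff]
  simp only [funext_iff, Pi.zero_apply, LinearEquiv.map_eq_zero_iff, Prod.forall]
  exact forall_comm

theorem eval_sum_C_sum_smul_mul_X_pow [Semiring F] [SMul R F]
    [IsScalarTower R F F] (e : ι → F) {s : ℕ} (u : ι × Fin s → R) (x : F) :
    (∑ j : Fin s, C (∑ i, u (i, j) • e i) * X ^ (j : ℕ)).eval x =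
      ∑ q : ι × Fin s, u q • (e q.1 * x ^ (q.2 : ℕ)) := by
  simp only [eval_finsetSum, eval_C_mul, eval_X_pow, Finset.sum_mul, smul_mul_assoc,
    Fintype.sum_prod_type]
  exact Finset.sum_comm

end Polynomial

open Polynomial in
theorem AGHP_inner_product_eq_poly_general (r s : ℕ)
    {F : Type*} [Field F] [Module (ZMod 2) F]
    (b : Module.Basis (Fin r) (ZMod 2) F)
    (u : Fin r × Fin s → ZMod 2) (hu : u ≠ 0) :
    let p : F[X] := ∑ j : Fin s, C (∑ i : Fin r, u (i, j) • b i) * X ^ (j : ℕ)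
    p ≠ 0 ∧ p.natDegree ≤ s - 1 ∧
      ∀ x y : F, ∑ q : Fin r × Fin s, u q * sBit b x y q = dotF b (p.eval x) y := by
  intro p
  have hp : p ≠ 0 := (sum_C_sum_smul_basis_mul_X_pow_eq_zero_iff b u).not.mpr hu
  refine ⟨hp, ?_, fun x y ↦ ?_⟩
  · have := (natDegree_lt_iff_degree_lt hp).mpr (degree_sum_fin_lt _)
    omega
  · -- `IsScalarTower (ZMod 2) F F` holds for any `ZMod 2`-module structure (`ZMod.instIsScalarTower`).
    rw [eval_sum_C_sum_smul_mul_X_pow, dotF_sum_smul_left]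
    rfl

open Polynomial in
theorem AGHP_inner_product_eq_poly (r s : ℕ) (hr : 0 < r) (hs : 0 < s)
    {F : Type*} [Field F] [Fintype F] [Module (ZMod 2) F]
    (b : Module.Basis (Fin r) (ZMod 2) F)
    (u : Fin r × Fin s → ZMod 2) (hu : u ≠ 0) :
    let p : F[X] := ∑ j : Fin s, C (∑ i : Fin r, u (i, j) • b i) * X ^ (j : ℕ)
    p ≠ 0 ∧ p.natDegree ≤ s - 1 ∧
      ∀ x y : F, ∑ q : Fin r × Fin s, u q * sBit b x y q = dotF b (p.eval x) y :=
  AGHP_inner_product_eq_poly_general r s b u hu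
end
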